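/- Let a : ℕ → ℝ be a bounded sequence whose Birkhoff averages B_n diverge, with α_{-1} = liminf a_n, β_{-1} = limsup a_n, α_0 = liminf B_n, β_0 = limsup B_n. Then for every ε > 0 small enough that α_0 + ε < β_0 − ε, there exists d > 1 such that the crossing times satisfy t_{j+1}(ε) / t_j(ε) ≥ d for all sufficiently large j; moreover one can take d = min{ (β_0 − α_{-1})/(α_0 − α_{-1} + 2ε), (β_{-1} − α_0)/(β_{-1} − β_0 + 2ε) }. -/

import Mathlib

/-!
Let `t < t'` be consecutive crossing times with `B t > β₀ - ε` and `B t' < α₀ + ε`. Since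
`∑_{i<n} a i = n B n`, the block `a t, …, a (t' - 1)` sums to less than
`(α₀ + ε) t' - (β₀ - ε) t`, while eventually each of its terms exceeds `α₋₁ - ε`. Comparing the
two bounds gives `(β₀ - α₋₁) t < (α₀ - α₋₁ + 2ε) t'`, and symmetrically, for an upward crossing,
`(β₋₁ - α₀) t < (β₋₁ - β₀ + 2ε) t'`. The same comparison shows that `a` drops below `α₀ + ε` and
rises above `β₀ - ε` infinitely often, which makes both denominators positive and `d > 1`.
-/

open Filter Topology

/-- Birkhoff averages: `birk a n = (1/n) * ∑_{i=0}^{n-1} a i` (junk value `0` at `n = 0`). -/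
noncomputable def birk (a : ℕ → ℝ) (n : ℕ) : ℝ := (∑ i ∈ Finset.range n, a i) / n

/-- Crossing times of a sequence `B` between levels `α + ε` and `β - ε`, 0-indexed:
`crossTimes B α β ε 0` is the first `n ≥ 1` with `B n > β - ε`, and given `t_j`,
`t_{j+1}` is the least `n > t_j` with `B n < α + ε` (resp. `B n > β - ε`) for `j` even
(resp. odd).  (With 1-based indexing as in the paper: odd indices are above `β - ε`,
even indices below `α + ε`.) -/
noncomputable def crossTimes (B : ℕ → ℝ) (α β ε : ℝ) : ℕ → ℕ
  | 0 => sInf {n | 1 ≤ n ∧ β - ε < B n}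
  | j+1 => sInf {n | crossTimes B α β ε j < n ∧
      if j % 2 = 0 then B n < α + ε else β - ε < B n}

open Finset

section Birkhoff

variable {a : ℕ → ℝ}

lemma abs_birk_le {C : ℝ} (h : ∀ n, |a n| ≤ C) (n : ℕ) : |birk a n| ≤ C := by
  rcases Nat.eq_zero_or_pos n with rfl | hn
  · simpa [birk] using (abs_nonneg _).trans (h 0)
  have hn' : (0 : ℝ) < n := by exact_mod_cast hn
  rw [birk, abs_div, Nat.abs_cast, div_le_iff₀ hn']
  calc |∑ i ∈ range n, a i| ≤ ∑ i ∈ range n, |a i| := abs_sum_le_sum_abs _ _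
    _ ≤ ∑ _i ∈ range n, C := sum_le_sum fun i _ => h i
    _ = C * n := by simp [mul_comm]

@[simp]
lemma birk_neg (a : ℕ → ℝ) (n : ℕ) : birk (fun i => -a i) n = -birk a n := by
  simp [birk, sum_neg_distrib, neg_div]

lemma lt_birk_iff {n : ℕ} (hn : 0 < n) {c : ℝ} :
    c < birk a n ↔ c * n < ∑ i ∈ range n, a i :=
  lt_div_iff₀ (by exact_mod_cast hn)

lemma birk_lt_iff {n : ℕ} (hn : 0 < n) {c : ℝ} :
    birk a n < c ↔ ∑ i ∈ range n, a i < c * n :=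
  div_lt_iff₀ (by exact_mod_cast hn)

lemma mul_lt_mul_of_birk_descent {m m' : ℕ} {c c' L : ℝ} (hm : 0 < m) (hmm' : m ≤ m')
    (hc : c < birk a m) (hc' : birk a m' < c') (hL : ∀ i ∈ Ico m m', L ≤ a i) :
    (c - L) * m < (c' - L) * m' := by
  have hsum_m := (lt_birk_iff hm).1 hc
  have hsum_m' := (birk_lt_iff (hm.trans_le hmm')).1 hc'
  have hblock : ∑ i ∈ Ico m m', a i = ∑ i ∈ range m', a i - ∑ i ∈ range m, a i :=
    sum_Ico_eq_sub _ hmm'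
  have hblock_ge : ((m' : ℝ) - m) * L ≤ ∑ i ∈ Ico m m', a i := by
    simpa [Nat.cast_sub hmm', mul_comm] using card_nsmul_le_sum _ _ L hL
  linarith

lemma mul_lt_mul_of_birk_ascent {m m' : ℕ} {c c' U : ℝ} (hm : 0 < m) (hmm' : m ≤ m')
    (hc : birk a m < c) (hc' : c' < birk a m') (hU : ∀ i ∈ Ico m m', a i ≤ U) :
    (U - c) * m < (U - c') * m' := by
  have := mul_lt_mul_of_birk_descent (a := fun i => -a i) (c := -c) (c' := -c') (L := -U)
    hm hmm' (by simpa using hc) (by simpa using hc') (fun i hi => by simpa using hU i hi)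
  linarith

lemma frequently_lt_of_birk_crossings {c c' : ℝ} (hcc' : c' ≤ c)
    (hhi : ∃ᶠ n in atTop, c < birk a n) (hlo : ∃ᶠ n in atTop, birk a n < c') :
    ∃ᶠ n in atTop, a n < c' := by
  refine frequently_atTop.2 fun N => ?_
  obtain ⟨m, hNm, hm⟩ := frequently_atTop.1 hhi (N + 1)
  obtain ⟨m', hmm', hm'⟩ := frequently_atTop.1 hlo m
  by_contra! hge
  have hdescent := mul_lt_mul_of_birk_descent (by omega) hmm' hm hm'
    (fun i hi => hge i (by simp at hi; omega))
  have : 0 ≤ (c - c') * m := mul_nonneg (by linarith) m.cast_nonneg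
  linarith

lemma frequently_gt_of_birk_crossings {c c' : ℝ} (hcc' : c' ≤ c)
    (hhi : ∃ᶠ n in atTop, c < birk a n) (hlo : ∃ᶠ n in atTop, birk a n < c') :
    ∃ᶠ n in atTop, c < a n := by
  have := frequently_lt_of_birk_crossings (a := fun i => -a i) (neg_le_neg hcc')
    (hlo.mono fun _ h => by simpa using h) (hhi.mono fun _ h => by simpa using h)
  exact this.mono fun _ h => by simpa using h

end Birkhoff

section CrossTimes

variable {B : ℕ → ℝ} {α β ε : ℝ}

lemma crossTimes_zero_spec (hhi : ∃ᶠ n in atTop, β - ε < B n) :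
    1 ≤ crossTimes B α β ε 0 ∧ β - ε < B (crossTimes B α β ε 0) := by
  obtain ⟨n, hn, h⟩ := frequently_atTop.1 hhi 1
  exact Nat.sInf_mem (s := {n | 1 ≤ n ∧ β - ε < B n}) ⟨n, hn, h⟩

lemma crossTimes_succ_spec (hhi : ∃ᶠ n in atTop, β - ε < B n)
    (hlo : ∃ᶠ n in atTop, B n < α + ε) (j : ℕ) :
    crossTimes B α β ε j < crossTimes B α β ε (j + 1) ∧
      if j % 2 = 0 then B (crossTimes B α β ε (j + 1)) < α + ε
      else β - ε < B (crossTimes B α β ε (j + 1)) := by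
  refine Nat.sInf_mem (s := {n | crossTimes B α β ε j < n ∧
    if j % 2 = 0 then B n < α + ε else β - ε < B n}) ?_
  split_ifs
  · obtain ⟨n, hn, h⟩ := frequently_atTop.1 hlo (crossTimes B α β ε j + 1)
    exact ⟨n, hn, h⟩
  · obtain ⟨n, hn, h⟩ := frequently_atTop.1 hhi (crossTimes B α β ε j + 1)
    exact ⟨n, hn, h⟩

lemma crossTimes_strictMono (hhi : ∃ᶠ n in atTop, β - ε < B n)
    (hlo : ∃ᶠ n in atTop, B n < α + ε) : StrictMono (crossTimes B α β ε) :=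
  strictMono_nat_of_lt_succ fun j => (crossTimes_succ_spec hhi hlo j).1

lemma crossTimes_pos (hhi : ∃ᶠ n in atTop, β - ε < B n)
    (hlo : ∃ᶠ n in atTop, B n < α + ε) (j : ℕ) : 0 < crossTimes B α β ε j :=
  (crossTimes_zero_spec hhi).1.trans ((crossTimes_strictMono hhi hlo).monotone j.zero_le)

lemma tendsto_crossTimes_atTop (hhi : ∃ᶠ n in atTop, β - ε < B n)
    (hlo : ∃ᶠ n in atTop, B n < α + ε) : Tendsto (crossTimes B α β ε) atTop atTop :=
  (crossTimes_strictMono hhi hlo).tendsto_atTop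

lemma crossTimes_above (hhi : ∃ᶠ n in atTop, β - ε < B n)
    (hlo : ∃ᶠ n in atTop, B n < α + ε) {j : ℕ} (hj : Even j) :
    β - ε < B (crossTimes B α β ε j) := by
  rcases j with _ | k
  · exact (crossTimes_zero_spec hhi).2
  · have hk : k % 2 ≠ 0 := by rw [Nat.even_add_one, Nat.even_iff] at hj; exact hj
    simpa [hk] using (crossTimes_succ_spec hhi hlo k).2

lemma crossTimes_below (hhi : ∃ᶠ n in atTop, β - ε < B n)
    (hlo : ∃ᶠ n in atTop, B n < α + ε) {j : ℕ} (hj : Odd j) :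
    B (crossTimes B α β ε j) < α + ε := by
  obtain ⟨k, rfl⟩ := hj
  have hk : (2 * k) % 2 = 0 := by omega
  simpa [hk] using (crossTimes_succ_spec hhi hlo (2 * k)).2

end CrossTimes

lemma min_le_crossTimes_succ_div {a : ℕ → ℝ} {α β ε L U : ℝ}
    (hhi : ∃ᶠ n in atTop, β - ε < birk a n) (hlo : ∃ᶠ n in atTop, birk a n < α + ε)
    (hL : L < α + ε) (hU : β - ε < U) {j : ℕ}
    (hbound : ∀ i ≥ crossTimes (birk a) α β ε j, L ≤ a i ∧ a i ≤ U) :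
    min ((β - ε - L) / (α + ε - L)) ((U - (α + ε)) / (U - (β - ε))) ≤
      (crossTimes (birk a) α β ε (j + 1) : ℝ) / crossTimes (birk a) α β ε j := by
  have ht := crossTimes_pos hhi hlo j
  have ht' : (0 : ℝ) < crossTimes (birk a) α β ε j := by exact_mod_cast ht
  have hts := (crossTimes_strictMono hhi hlo (Nat.lt_succ_self j)).le
  have hblock : ∀ i ∈ Ico (crossTimes (birk a) α β ε j) (crossTimes (birk a) α β ε (j + 1)),
      L ≤ a i ∧ a i ≤ U := fun i hi => hbound i (mem_Ico.1 hi).1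
  rcases Nat.even_or_odd j with hj | hj
  · have := mul_lt_mul_of_birk_descent ht hts (crossTimes_above hhi hlo hj)
      (crossTimes_below hhi hlo hj.add_one) fun i hi => (hblock i hi).1
    exact (min_le_left _ _).trans ((div_le_div_iff₀ (by linarith) ht').2 (by linarith))
  · have := mul_lt_mul_of_birk_ascent ht hts (crossTimes_below hhi hlo hj)
      (crossTimes_above hhi hlo hj.add_one) fun i hi => (hblock i hi).2
    exact (min_le_right _ _).trans ((div_le_div_iff₀ (by linarith) ht').2 (by linarith))

theorem crossing_times_grow_exponentially_general (a : ℕ → ℝ)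
    (hbdd : ∃ C : ℝ, ∀ n, |a n| ≤ C)
    (ε : ℝ) (hε : 0 < ε)
    (hsmall : liminf (birk a) atTop + ε < limsup (birk a) atTop - ε) :
    1 < min ((limsup (birk a) atTop - liminf a atTop) /
          (liminf (birk a) atTop - liminf a atTop + 2 * ε))
        ((limsup a atTop - liminf (birk a) atTop) /
          (limsup a atTop - limsup (birk a) atTop + 2 * ε)) ∧
    ∀ᶠ j : ℕ in atTop,
      min ((limsup (birk a) atTop - liminf a atTop) /
            (liminf (birk a) atTop - liminf a atTop + 2 * ε))
          ((limsup a atTop - liminf (birk a) atTop) /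
            (limsup a atTop - limsup (birk a) atTop + 2 * ε)) ≤
        (crossTimes (birk a) (liminf (birk a) atTop) (limsup (birk a) atTop) ε (j + 1) : ℝ) /
          (crossTimes (birk a) (liminf (birk a) atTop) (limsup (birk a) atTop) ε j : ℝ) := by
  obtain ⟨C, hC⟩ := hbdd
  set αₐ := liminf a atTop
  set βₐ := limsup a atTop
  set α₀ := liminf (birk a) atTop
  set β₀ := limsup (birk a) atTop
  obtain ⟨ha_le, ha_ge⟩ := isBoundedUnder_le_abs.1 (isBoundedUnder_of ⟨C, hC⟩)
  obtain ⟨hB_le, hB_ge⟩ := isBoundedUnder_le_abs.1 (isBoundedUnder_of ⟨C, abs_birk_le hC⟩)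
  have hhi : ∃ᶠ n in atTop, β₀ - ε < birk a n :=
    frequently_lt_of_lt_limsup hB_ge.isCoboundedUnder_le (by linarith)
  have hlo : ∃ᶠ n in atTop, birk a n < α₀ + ε :=
    frequently_lt_of_liminf_lt hB_le.isCoboundedUnder_ge (by linarith)
  have hαₐ : αₐ ≤ α₀ + ε := liminf_le_of_frequently_le
    ((frequently_lt_of_birk_crossings hsmall.le hhi hlo).mono fun _ => le_of_lt) ha_ge
  have hβₐ : β₀ - ε ≤ βₐ := le_limsup_of_frequently_le
    ((frequently_gt_of_birk_crossings hsmall.le hhi hlo).mono fun _ => le_of_lt) ha_le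
  have hDα : 0 < α₀ - αₐ + 2 * ε := by linarith
  have hDβ : 0 < βₐ - β₀ + 2 * ε := by linarith
  refine ⟨lt_min ((one_lt_div hDα).2 (by linarith)) ((one_lt_div hDβ).2 (by linarith)), ?_⟩
  obtain ⟨N, hN⟩ := eventually_atTop.1
    ((eventually_lt_of_lt_liminf (show αₐ - ε < αₐ by linarith) ha_ge).and
      (eventually_lt_of_limsup_lt (show βₐ < βₐ + ε by linarith) ha_le))
  filter_upwards [(tendsto_crossTimes_atTop hhi hlo).eventually_ge_atTop N] with j hj
  convert min_le_crossTimes_succ_div hhi hlo (L := αₐ - ε) (U := βₐ + ε) (by linarith)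
    (by linarith) fun i hi => (hN i (hj.trans hi)).imp le_of_lt le_of_lt using 3 <;> ring

/-- **Proposition 1.**  Let `a` be bounded with divergent Birkhoff averages `B_n`,
and write `α₋₁ = liminf a`, `β₋₁ = limsup a`, `α₀ = liminf B`, `β₀ = limsup B`.
For every `ε > 0` small enough that `α₀ + ε < β₀ - ε`, the crossing times satisfy
`t_{j+1}(ε) / t_j(ε) ≥ d` for all sufficiently large `j`, where
`d = min{(β₀ - α₋₁)/(α₀ - α₋₁ + 2ε), (β₋₁ - α₀)/(β₋₁ - β₀ + 2ε)} > 1`. -/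
theorem crossing_times_grow_exponentially (a : ℕ → ℝ)
    (hbdd : ∃ C : ℝ, ∀ n, |a n| ≤ C)
    (hdiv : ¬ ∃ L : ℝ, Tendsto (birk a) atTop (𝓝 L))
    (ε : ℝ) (hε : 0 < ε)
    (hsmall : liminf (birk a) atTop + ε < limsup (birk a) atTop - ε) :
    1 < min ((limsup (birk a) atTop - liminf a atTop) /
          (liminf (birk a) atTop - liminf a atTop + 2 * ε))
        ((limsup a atTop - liminf (birk a) atTop) /
          (limsup a atTop - limsup (birk a) atTop + 2 * ε)) ∧
    ∀ᶠ j : ℕ in atTop,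
      min ((limsup (birk a) atTop - liminf a atTop) /
            (liminf (birk a) atTop - liminf a atTop + 2 * ε))
          ((limsup a atTop - liminf (birk a) atTop) /
            (limsup a atTop - limsup (birk a) atTop + 2 * ε)) ≤
        (crossTimes (birk a) (liminf (birk a) atTop) (limsup (birk a) atTop) ε (j + 1) : ℝ) /
          (crossTimes (birk a) (liminf (birk a) atTop) (limsup (birk a) atTop) ε j : ℝ) :=
  crossing_times_grow_exponentially_general a hbdd ε hε hsmall
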